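/- For any graph G, any prime p, and any k ≥ 0, the value f_G^+(p^k) = Σ_{N_1⋯N_v = p^k} |μ(n_1)⋯μ(n_e)| (sum over all edge numberings of G) equals the coefficient of x^k in the polynomial Q_G^+(x) = Σ_{F ⊆ E} x^{v(F)}. -/

import Mathlib

open scoped BigOperators Classical

noncomputable section

/-- The vertex numbering `N_r` associated to an edge numbering `n` of the graph with
vertex set `Fin v` and edge set `E`: the lcm of `n a` over the edges `a` incident to `r`
(equal to `1` if `r` is isolated). -/
def vertexNum (v : ℕ) (E : Finset (Sym2 (Fin v))) (n : {a : Sym2 (Fin v) // a ∈ E} → ℕ+)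
    (r : Fin v) : ℕ :=
  (E.attach.filter fun a => r ∈ a.1).lcm fun a => (n a : ℕ)

/-- `v(F)`: the number of vertices incident to at least one edge of `F`. -/
def vCount (v : ℕ) (F : Finset (Sym2 (Fin v))) : ℕ :=
  (Finset.univ.filter fun r : Fin v => ∃ a ∈ F, r ∈ a).card

/-- `f_G^+(m) = Σ_{N_1 ⋯ N_v = m} |μ(n_1) ⋯ μ(n_e)|`, the sum extending over all edge
numberings of the graph whose associated vertex numbering has product `m`. -/
def fGplus (v : ℕ) (E : Finset (Sym2 (Fin v))) (m : ℕ) : ℤ :=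
  ∑ᶠ n : {a : Sym2 (Fin v) // a ∈ E} → ℕ+,
    if ∏ r, vertexNum v E n r = m then |∏ a, ArithmeticFunction.moebius (n a : ℕ)| else 0

/-- The polynomial `Q_G^+(x) = Σ_{F ⊆ E} x^{v(F)}`. -/
def QGplusPoly (v : ℕ) (E : Finset (Sym2 (Fin v))) : Polynomial ℤ :=
  ∑ F ∈ E.powerset, Polynomial.X ^ vCount v F

/-! A numbering contributing to `f_G^+(p^k)` has squarefree labels dividing `p^k`, so every label
is `1` or `p`; such numberings are exactly the indicator numberings of subsets `F ⊆ E`. The one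
attached to `F` has weight `1` and vertex labels `p` on the `v(F)` vertices covered by `F` and
`1` elsewhere, hence contributes to `f_G^+(p^k)` exactly when `v(F) = k`. -/

open ArithmeticFunction
open scoped ArithmeticFunction.Moebius

lemma Nat.eq_one_or_self_of_squarefree_of_dvd_prime_pow {n p k : ℕ} (hp : p.Prime)
    (hn : Squarefree n) (h : n ∣ p ^ k) : n = 1 ∨ n = p := by
  rcases eq_or_ne k 0 with rfl | hk
  · exact Or.inl (Nat.dvd_one.mp h)
  · exact (Nat.dvd_prime hp).mp ((hn.dvd_pow_iff_dvd hk).mp h)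

section IndicatorNumbering

variable {v : ℕ} {E : Finset (Sym2 (Fin v))}

def indicatorNumbering (E : Finset (Sym2 (Fin v))) (q : ℕ+) (F : Finset (Sym2 (Fin v))) :
    {a : Sym2 (Fin v) // a ∈ E} → ℕ+ :=
  fun a => if a.1 ∈ F then q else 1

lemma dvd_vertexNum (n : {a : Sym2 (Fin v) // a ∈ E} → ℕ+) {a : {a : Sym2 (Fin v) // a ∈ E}}
    {r : Fin v} (hr : r ∈ a.1) : (n a : ℕ) ∣ vertexNum v E n r :=
  Finset.dvd_lcm (by simp [hr])

lemma vertexNum_indicatorNumbering (q : ℕ+) {F : Finset (Sym2 (Fin v))} (hF : F ⊆ E)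
    (r : Fin v) :
    vertexNum v E (indicatorNumbering E q F) r = if ∃ a ∈ F, r ∈ a then (q : ℕ) else 1 := by
  have hdvd : vertexNum v E (indicatorNumbering E q F) r ∣ q :=
    Finset.lcm_dvd_iff.mpr fun b _ => by unfold indicatorNumbering; split_ifs <;> simp
  split_ifs with hcov
  · obtain ⟨a, haF, hra⟩ := hcov
    refine Nat.dvd_antisymm hdvd ?_
    simpa [indicatorNumbering, haF] using
      dvd_vertexNum (indicatorNumbering E q F) (a := ⟨a, hF haF⟩) hra
  · refine Nat.eq_one_of_dvd_one (Finset.lcm_dvd_iff.mpr fun b hb => ?_)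
    have hbF : b.1 ∉ F := fun hbF => hcov ⟨b.1, hbF, (Finset.mem_filter.mp hb).2⟩
    simp [indicatorNumbering, hbF]

lemma prod_vertexNum_indicatorNumbering (q : ℕ+) {F : Finset (Sym2 (Fin v))} (hF : F ⊆ E) :
    ∏ r, vertexNum v E (indicatorNumbering E q F) r = (q : ℕ) ^ vCount v F := by
  simp only [vertexNum_indicatorNumbering q hF, Finset.prod_ite, Finset.prod_const, one_pow,
    mul_one, vCount]

lemma abs_prod_moebius_indicatorNumbering {q : ℕ+} (hq : Squarefree (q : ℕ))
    (F : Finset (Sym2 (Fin v))) :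
    |∏ a, μ (indicatorNumbering E q F a : ℕ)| = 1 := by
  rw [Finset.abs_prod]
  refine Finset.prod_eq_one fun a _ => abs_moebius_eq_one_of_squarefree ?_
  unfold indicatorNumbering
  split_ifs
  · exact hq
  · exact squarefree_one

lemma subset_of_indicatorNumbering_eq {q : ℕ+} (hq : q ≠ 1) {F F' : Finset (Sym2 (Fin v))}
    (hF : F ⊆ E) (h : indicatorNumbering E q F = indicatorNumbering E q F') : F ⊆ F' := by
  intro a ha
  have := congrFun h ⟨a, hF ha⟩
  simp only [indicatorNumbering, ha, if_true] at this
  by_contra ha'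
  exact hq (by simpa [ha'] using this)

lemma indicatorNumbering_injOn {q : ℕ+} (hq : q ≠ 1) :
    Set.InjOn (indicatorNumbering E q) (E.powerset : Set (Finset (Sym2 (Fin v)))) :=
  fun _ hF _ hF' h =>
    (subset_of_indicatorNumbering_eq hq (Finset.mem_powerset.mp hF) h).antisymm
      (subset_of_indicatorNumbering_eq hq (Finset.mem_powerset.mp hF') h.symm)

lemma mem_image_indicatorNumbering {q : ℕ+} {n : {a : Sym2 (Fin v) // a ∈ E} → ℕ+}
    (hn : ∀ a, n a = 1 ∨ n a = q) :
    n ∈ E.powerset.image (indicatorNumbering E q) := by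
  refine Finset.mem_image.mpr ⟨(Finset.univ.filter fun a => n a = q).map
    (Function.Embedding.subtype _), Finset.mem_powerset.mpr fun b hb => ?_, funext fun a => ?_⟩
  · obtain ⟨a, -, rfl⟩ := Finset.mem_map.mp hb
    exact a.2
  · rcases hn a with h | h <;> by_cases hq : (1 : ℕ+) = q <;> simp_all [indicatorNumbering]

lemma mem_image_indicatorNumbering_of_prod_vertexNum_eq {p k : ℕ} (hp : p.Prime)
    {n : {a : Sym2 (Fin v) // a ∈ E} → ℕ+}
    (hprod : ∏ r, vertexNum v E n r = p ^ k) (hμ : ∏ a, μ (n a : ℕ) ≠ 0) :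
    n ∈ E.powerset.image (indicatorNumbering E ⟨p, hp.pos⟩) := by
  refine mem_image_indicatorNumbering fun a => ?_
  have hsq : Squarefree (n a : ℕ) :=
    moebius_ne_zero_iff_squarefree.mp (Finset.prod_ne_zero_iff.mp hμ a (Finset.mem_univ a))
  have hdvd : (n a : ℕ) ∣ p ^ k :=
    (dvd_vertexNum n (Sym2.out_fst_mem a.1)).trans
      (hprod ▸ Finset.dvd_prod_of_mem _ (Finset.mem_univ _))
  rcases Nat.eq_one_or_self_of_squarefree_of_dvd_prime_pow hp hsq hdvd with h | h
  · exact Or.inl (PNat.coe_eq_one_iff.mp h)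
  · exact Or.inr (PNat.eq h)

end IndicatorNumbering

theorem stmt3_general (v : ℕ) (E : Finset (Sym2 (Fin v)))
    (p : ℕ) (hp : p.Prime) (k : ℕ) :
    fGplus v E (p ^ k) = (QGplusPoly v E).coeff k := by
  set P : ℕ+ := ⟨p, hp.pos⟩
  have hP : P ≠ 1 := fun h => hp.ne_one (congrArg PNat.val h)
  have hsupp : Function.support (fun n : {a : Sym2 (Fin v) // a ∈ E} → ℕ+ =>
      if ∏ r, vertexNum v E n r = p ^ k then |∏ a, μ (n a : ℕ)| else 0) ⊆
      E.powerset.image (indicatorNumbering E P) := fun n hn => by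
    rw [Function.mem_support, ne_eq, ite_eq_right_iff, Classical.not_imp] at hn
    exact mem_image_indicatorNumbering_of_prod_vertexNum_eq hp hn.1 (abs_ne_zero.mp hn.2)
  rw [fGplus, finsum_eq_sum_of_support_subset _ hsupp,
    Finset.sum_image (indicatorNumbering_injOn hP), QGplusPoly, Polynomial.finsetSum_coeff]
  refine Finset.sum_congr rfl fun F hF => ?_
  rw [prod_vertexNum_indicatorNumbering P (Finset.mem_powerset.mp hF),
    abs_prod_moebius_indicatorNumbering (q := P) hp.squarefree, Polynomial.coeff_X_pow]
  simp [P, (Nat.pow_right_injective hp.two_le).eq_iff, eq_comm]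

/-- For any prime `p` and `k ≥ 0`, `f_G^+(p^k)` equals the coefficient
of `x^k` in `Q_G^+(x)`. -/
theorem stmt3 (v : ℕ) (E : Finset (Sym2 (Fin v))) (hE : ∀ a ∈ E, ¬ a.IsDiag)
    (p : ℕ) (hp : p.Prime) (k : ℕ) :
    fGplus v E (p ^ k) = (QGplusPoly v E).coeff k :=
  stmt3_general v E p hp k

end
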